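/- arXiv:2402.03237 — 2 statements merged into one kernel-verified Lean document; each statement's English description precedes it below -/
import Mathlib

section
/- Let (x_j)_{j∈J} be a finite frame of a finite-dimensional real inner product space H and let λ_c be the infimum of all λ>0 such that (x_j)_{j∈J} does λ-saturation recovery on the closed unit ball B_H. Then for every λ>λ_c and every x∈H with ‖x‖≤1, the subfamily (x_j)_{j∈J_λ^♯(x)} with J_λ^♯(x)={j∈J : |⟨x,x_j⟩|<λ} is a frame of H (i.e., it spans H). -/
local notation "⟪" x ", " y "⟫" => @inner ℝ _ _ x y

/-- The saturation function `φ_λ`: `φ_λ(t) = t` if `|t| ≤ λ` and `φ_λ(t) = sign(t)·λ` else. -/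
noncomputable def satur (l t : ℝ) : ℝ := max (-l) (min l t)

lemma satur_of_ge {l t : ℝ} (hl : 0 < l) (h : l ≤ t) : satur l t = l := by
  unfold satur
  rw [min_eq_left h]
  exact max_eq_right (by linarith)

lemma satur_of_le_neg {l t : ℝ} (hl : 0 < l) (h : t ≤ -l) : satur l t = -l := by
  unfold satur
  rw [min_eq_right (by linarith), max_eq_left h]

lemma satur_of_abs_le {l t : ℝ} (h : |t| ≤ l) : satur l t = t := by
  rw [abs_le] at h
  unfold satur
  rw [min_eq_right h.2, max_eq_right h.1]

/-- If `u` is orthogonal to every `xv j` of a spanning family, then `u = 0`. -/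
lemma eq_zero_of_inner_eq_zero
    {H : Type*} [NormedAddCommGroup H] [InnerProductSpace ℝ H]
    {J : Type*} (xv : J → H)
    (hframe : Submodule.span ℝ (Set.range xv) = ⊤)
    (u : H) (hu : ∀ j, ⟪u, xv j⟫ = 0) : u = 0 := by
  have hle : Submodule.span ℝ (Set.range xv) ≤ (ℝ ∙ u)ᗮ := by
    rw [Submodule.span_le]
    rintro _ ⟨j, rfl⟩
    rw [SetLike.mem_coe, Submodule.mem_orthogonal_singleton_iff_inner_right]
    exact hu j
  have : u ∈ (ℝ ∙ u)ᗮ := by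
    have : u ∈ Submodule.span ℝ (Set.range xv) := by rw [hframe]; trivial
    exact hle this
  have h0 : ⟪u, u⟫ = 0 :=
    this u (Submodule.mem_span_singleton_self u)
  exact inner_self_eq_zero.mp h0

theorem strictly_above_critical_level_open_unsaturated_frame
    {H : Type*} [NormedAddCommGroup H] [InnerProductSpace ℝ H] [FiniteDimensional ℝ H]
    {J : Type*} [Fintype J] (xv : J → H)
    (hframe : Submodule.span ℝ (Set.range xv) = ⊤)
    (lamc : ℝ)
    (hlamc : lamc = sInf {l : ℝ | 0 < l ∧ Set.InjOn
      (fun x : H => fun j : J => satur l ⟪x, xv j⟫) (Metric.closedBall (0 : H) 1)}) :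
    ∀ lam : ℝ, lamc < lam → ∀ x : H, ‖x‖ ≤ 1 →
      Submodule.span ℝ (xv '' {j : J | |⟪x, xv j⟫| < lam}) = ⊤ := by
  intro lam hlam x hx
  set S : Set ℝ := {l : ℝ | 0 < l ∧ Set.InjOn
      (fun x : H => fun j : J => satur l ⟪x, xv j⟫) (Metric.closedBall (0 : H) 1)} with hS
  -- a uniform bound on the norms of the frame vectors
  obtain ⟨C₀, hC₀⟩ : ∃ C : ℝ, ∀ j, ‖xv j‖ ≤ C := Finite.exists_le _
  set C : ℝ := max C₀ 0 with hCdef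
  have hC : ∀ j, ‖xv j‖ ≤ C := fun j => le_max_of_le_left (hC₀ j)
  have hC0 : 0 ≤ C := le_max_right _ _
  -- S is nonempty: any l > C does saturation recovery on the ball
  have hSne : S.Nonempty := by
    refine ⟨C + 1, by positivity, ?_⟩
    intro a ha b hb hab
    have key : ∀ z : H, ‖z‖ ≤ 1 → ∀ j, satur (C + 1) ⟪z, xv j⟫ = ⟪z, xv j⟫ := by
      intro z hz j
      apply satur_of_abs_le
      calc |⟪z, xv j⟫| ≤ ‖z‖ * ‖xv j‖ := abs_real_inner_le_norm _ _
        _ ≤ 1 * C := by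
            apply mul_le_mul hz (hC j) (norm_nonneg _) zero_le_one
        _ ≤ C + 1 := by linarith
    rw [Metric.mem_closedBall, dist_zero_right] at ha hb
    have heq : ∀ j, ⟪a - b, xv j⟫ = 0 := by
      intro j
      have h1 := congrFun hab j
      simp only at h1
      rw [key a ha j, key b hb j] at h1
      rw [inner_sub_left, h1, sub_self]
    exact sub_eq_zero.mp (eq_zero_of_inner_eq_zero xv hframe (a - b) heq)
  -- pick l ∈ S with l < lam
  have hbdd : BddBelow S := ⟨0, fun l hl => le_of_lt hl.1⟩
  have hlt : sInf S < lam := hlamc ▸ hlam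
  obtain ⟨l, hlS, hllam⟩ := (csInf_lt_iff hbdd hSne).mp hlt
  obtain ⟨hl0, hInj⟩ := hlS
  have hlam0 : 0 < lam := lt_trans hl0 hllam
  -- reduce to: any vector orthogonal to the unsaturated vectors is zero
  rw [← Submodule.orthogonal_eq_bot_iff, Submodule.eq_bot_iff]
  intro y hy
  by_contra hy0
  have hyn : 0 < ‖y‖ := norm_pos_iff.mpr hy0
  have hyperp : ∀ j, |⟪x, xv j⟫| < lam → ⟪y, xv j⟫ = 0 := by
    intro j hj
    have hmem : xv j ∈ Submodule.span ℝ (xv '' {j : J | |⟪x, xv j⟫| < lam}) :=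
      Submodule.subset_span ⟨j, hj, rfl⟩
    have := hy (xv j) hmem
    rw [real_inner_comm] at this
    exact this
  -- parameters
  set t : ℝ := (l / lam + 1) / 2 with htdef
  have hdl : l / lam < 1 := (div_lt_one hlam0).mpr hllam
  have hdl0 : 0 < l / lam := div_pos hl0 hlam0
  have ht0 : 0 < t := by rw [htdef]; linarith
  have ht1 : t < 1 := by rw [htdef]; linarith
  have htl : l < t * lam := by
    have : l / lam < t := by rw [htdef]; linarith
    exact (div_lt_iff₀ hlam0).mp this
  set δ : ℝ := t * lam - l with hδdef
  have hδ0 : 0 < δ := by rw [hδdef]; linarith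
  set ε : ℝ := min ((1 - t) / ‖y‖) (δ / (‖y‖ * C + 1)) with hεdef
  have hε0 : 0 < ε := by
    apply lt_min
    · exact div_pos (by linarith) hyn
    · apply div_pos hδ0; positivity
  have hεy : ε * ‖y‖ ≤ 1 - t := by
    have h1 : ε ≤ (1 - t) / ‖y‖ := min_le_left _ _
    calc ε * ‖y‖ ≤ (1 - t) / ‖y‖ * ‖y‖ := by
          exact mul_le_mul_of_nonneg_right h1 (norm_nonneg _)
      _ = 1 - t := div_mul_cancel₀ _ (ne_of_gt hyn)
  have hεC : ε * (‖y‖ * C) < δ := by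
    have h1 : ε ≤ δ / (‖y‖ * C + 1) := min_le_right _ _
    have h2 : (0:ℝ) < ‖y‖ * C + 1 := by positivity
    have h3 : ε * (‖y‖ * C + 1) ≤ δ := by
      calc ε * (‖y‖ * C + 1) ≤ δ / (‖y‖ * C + 1) * (‖y‖ * C + 1) :=
            mul_le_mul_of_nonneg_right h1 (le_of_lt h2)
        _ = δ := div_mul_cancel₀ _ (ne_of_gt h2)
    nlinarith
  -- the two points
  set a : H := t • x + ε • y with hadef
  set b : H := t • x - ε • y with hbdef
  have hna : a ∈ Metric.closedBall (0 : H) 1 := by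
    rw [Metric.mem_closedBall, dist_zero_right]
    calc ‖a‖ ≤ ‖t • x‖ + ‖ε • y‖ := norm_add_le _ _
      _ = t * ‖x‖ + ε * ‖y‖ := by
          rw [norm_smul, norm_smul, Real.norm_eq_abs, Real.norm_eq_abs,
            abs_of_pos ht0, abs_of_pos hε0]
      _ ≤ t * 1 + (1 - t) := by
          have := mul_le_mul_of_nonneg_left hx (le_of_lt ht0)
          linarith
      _ = 1 := by ring
  have hnb : b ∈ Metric.closedBall (0 : H) 1 := by
    rw [Metric.mem_closedBall, dist_zero_right]
    calc ‖b‖ ≤ ‖t • x‖ + ‖ε • y‖ := norm_sub_le _ _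
      _ = t * ‖x‖ + ε * ‖y‖ := by
          rw [norm_smul, norm_smul, Real.norm_eq_abs, Real.norm_eq_abs,
            abs_of_pos ht0, abs_of_pos hε0]
      _ ≤ t * 1 + (1 - t) := by
          have := mul_le_mul_of_nonneg_left hx (le_of_lt ht0)
          linarith
      _ = 1 := by ring
  -- the saturated measurements agree
  have hsame : (fun j : J => satur l ⟪a, xv j⟫) = (fun j : J => satur l ⟪b, xv j⟫) := by
    funext j
    have hia : ⟪a, xv j⟫ = t * ⟪x, xv j⟫ + ε * ⟪y, xv j⟫ := by
      rw [hadef, inner_add_left, real_inner_smul_left, real_inner_smul_left]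
    have hib : ⟪b, xv j⟫ = t * ⟪x, xv j⟫ - ε * ⟪y, xv j⟫ := by
      rw [hbdef, inner_sub_left, real_inner_smul_left, real_inner_smul_left]
    by_cases hj : |⟪x, xv j⟫| < lam
    · rw [hia, hib, hyperp j hj]; ring_nf
    · push_neg at hj
      have hw : ε * |⟪y, xv j⟫| < δ := by
        calc ε * |⟪y, xv j⟫| ≤ ε * (‖y‖ * ‖xv j‖) := by
              exact mul_le_mul_of_nonneg_left (abs_real_inner_le_norm _ _) (le_of_lt hε0)
          _ ≤ ε * (‖y‖ * C) := by
              apply mul_le_mul_of_nonneg_left _ (le_of_lt hε0)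
              exact mul_le_mul_of_nonneg_left (hC j) (norm_nonneg _)
          _ < δ := hεC
      have hw1 : ε * ⟪y, xv j⟫ ≤ ε * |⟪y, xv j⟫| :=
        mul_le_mul_of_nonneg_left (le_abs_self _) hε0.le
      have hw2 : -(ε * |⟪y, xv j⟫|) ≤ ε * ⟪y, xv j⟫ := by
        have h := mul_le_mul_of_nonneg_left (neg_abs_le ⟪y, xv j⟫) hε0.le
        nlinarith
      rcases le_or_gt lam ⟪x, xv j⟫ with hs | hs
      · -- positive saturated case
        have hts : t * lam ≤ t * ⟪x, xv j⟫ := mul_le_mul_of_nonneg_left hs ht0.le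
        have h1 : l ≤ ⟪a, xv j⟫ := by rw [hia]; linarith
        have h2 : l ≤ ⟪b, xv j⟫ := by rw [hib]; linarith
        rw [satur_of_ge hl0 h1, satur_of_ge hl0 h2]
      · -- negative saturated case
        have hsneg : ⟪x, xv j⟫ ≤ -lam := by
          rcases le_abs.mp hj with h | h
          · linarith
          · linarith
        have hts : t * ⟪x, xv j⟫ ≤ -(t * lam) := by
          have h := mul_le_mul_of_nonneg_left hsneg ht0.le
          rw [mul_neg] at h; exact h
        have h1 : ⟪a, xv j⟫ ≤ -l := by rw [hia]; linarith
        have h2 : ⟪b, xv j⟫ ≤ -l := by rw [hib]; linarith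
        rw [satur_of_le_neg hl0 h1, satur_of_le_neg hl0 h2]
  have hab : a = b := hInj hna hnb hsame
  have : ε • y = 0 := by
    have h1 : t • x + ε • y = t • x - ε • y := by rw [← hadef, ← hbdef, hab]
    have h2 : (2 * ε) • y = 0 := by
      have := sub_eq_zero.mpr h1
      rw [show t • x + ε • y - (t • x - ε • y) = (2 * ε) • y by
        rw [two_mul, add_smul]; abel] at this
      exact this
    have h2ε : (2 * ε : ℝ) ≠ 0 := by positivity
    rcases smul_eq_zero.mp h2 with h | h
    · exact absurd h h2ε
    · rw [h, smul_zero]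
  rcases smul_eq_zero.mp this with h | h
  · exact absurd h (ne_of_gt hε0)
  · exact hy0 h
end

section
/- Let (x_j)_{j=1}^m be a full spark frame for ℝ^n (m≥n) and let λ_c be the infimum of all λ>0 such that (x_j)_{j=1}^m does λ-saturation recovery on the closed unit ball of ℝ^n. Then λ_c = max over unit vectors x∈ℝ^n of the maximum over all index subsets 1≤k_0<k_1<⋯<k_{m−n}≤m of min_{0≤j≤m−n} |⟨x, x_{k_j}⟩|. -/
local notation "⟪" x ", " y "⟫" => @inner ℝ _ _ x y

/-!
Write `k = m - n + 1` and let `M` be the largest value of `min_{j ∈ s} |⟨x, x_j⟩|` over unit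
vectors `x` and index sets `s` of size `k` (it exists by compactness of the sphere).

If `l > M` and `x ≠ y` in the unit ball have the same saturated measurements, then by full spark
`⟨x - y, x_j⟩ ≠ 0` for at least `k` indices, and on each of them the two measurements can only agree
by being saturated, so `|⟨x, x_j⟩|, |⟨y, x_j⟩| ≥ l`; normalising a nonzero one of `x`, `y` gives a
value above `M`. Conversely, if `l < M` is attained at `(x, s)`, pick `u ≠ 0` orthogonal to the
fewer than `n` vectors outside `s`: for `c < 1` close to `1` and small `ε`, the points `c x` and
`c x + ε u` lie in the ball and have the same saturated measurements (those in `s` stay beyond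
`±l`). Hence the recovering levels contain `(M, ∞)` and lie in `[M, ∞)`, so `λ_c = M`.
-/

open Filter Finset Metric Module Set Topology

lemma satur_eq_self {l a : ℝ} (h : |a| ≤ l) : satur l a = a := by
  rw [abs_le] at h
  rw [satur, min_eq_right h.2, max_eq_right h.1]

lemma le_abs_of_satur_eq_of_ne {l a b : ℝ} (h : satur l a = satur l b) (hab : a ≠ b) :
    l ≤ |a| := by
  by_contra! ha
  rw [satur_eq_self ha.le] at h
  rw [abs_lt] at ha
  unfold satur at h
  grind

lemma satur_eq_of_abs_sub_le {l a b : ℝ} (hl : 0 ≤ l) (h : |b - a| ≤ |a| - l) :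
    satur l a = satur l b := by
  rw [abs_le] at h
  unfold satur
  rcases le_total 0 a with ha | ha
  · rw [abs_of_nonneg ha] at h
    rw [min_eq_left (by linarith), min_eq_left (by linarith)]
  · rw [abs_of_nonpos ha] at h
    rw [min_eq_right (by linarith), min_eq_right (by linarith), max_eq_left (by linarith),
      max_eq_left (by linarith)]

def IsFullSpark (K : Type*) {V ι : Type*} [Field K] [AddCommGroup V] [Module K V]
    (v : ι → V) : Prop :=
  ∀ s : Finset ι, s.card = finrank K V → LinearIndependent K (fun j : s => v j)

section InnerProductSpace

variable {ι E : Type*} [NormedAddCommGroup E] [InnerProductSpace ℝ E] [FiniteDimensional ℝ E]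
  {v : ι → E}

lemma IsFullSpark.eq_zero_of_inner_eq_zero (hv : IsFullSpark ℝ v) {u : E} {t : Finset ι}
    (ht : finrank ℝ E ≤ t.card) (h : ∀ j ∈ t, ⟪u, v j⟫ = 0) : u = 0 := by
  obtain ⟨t', ht't, ht'⟩ := Finset.exists_subset_card_eq ht
  have hspan := (hv t' ht').span_eq_top_of_card_eq_finrank' (by rw [Fintype.card_coe, ht'])
  have hker : (⊤ : Submodule ℝ E) ≤ LinearMap.ker (innerₛₗ ℝ u) := by
    rw [← hspan, Submodule.span_le]
    rintro _ ⟨j, rfl⟩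
    exact h j (ht't j.2)
  exact inner_self_eq_zero.1 (hker Submodule.mem_top)

lemma IsFullSpark.exists_card_eq_forall_inner_ne_zero [Fintype ι] (hv : IsFullSpark ℝ v)
    (hcard : finrank ℝ E ≤ Fintype.card ι) {u : E} (hu : u ≠ 0) :
    ∃ s : Finset ι, s.card = Fintype.card ι - finrank ℝ E + 1 ∧ ∀ j ∈ s, ⟪u, v j⟫ ≠ 0 := by
  classical
  set Z := univ.filter fun j => ⟪u, v j⟫ = 0
  have hZ : Z.card < finrank ℝ E := by
    by_contra! hZ
    exact hu (hv.eq_zero_of_inner_eq_zero hZ fun j hj => (mem_filter.1 hj).2)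
  obtain ⟨s, hsZ, hs⟩ : ∃ s ⊆ Zᶜ, s.card = Fintype.card ι - finrank ℝ E + 1 :=
    Finset.exists_subset_card_eq (by rw [card_compl]; omega)
  exact ⟨s, hs, fun j hj => by simpa [Z] using hsZ hj⟩

lemma exists_ne_zero_forall_inner_eq_zero (v : ι → E) (t : Finset ι)
    (ht : t.card < finrank ℝ E) : ∃ u ≠ 0, ∀ j ∈ t, ⟪u, v j⟫ = 0 := by
  let f : E →ₗ[ℝ] t → ℝ := LinearMap.pi fun j => innerₛₗ ℝ (v j)
  have hker : LinearMap.ker f ≠ ⊥ :=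
    LinearMap.ker_ne_bot_of_finrank_lt (by rwa [finrank_fintype_fun_eq_card, Fintype.card_coe])
  obtain ⟨u, hu, hu0⟩ := Submodule.exists_mem_ne_zero_of_ne_bot hker
  refine ⟨u, hu0, fun j hj => ?_⟩
  rw [real_inner_comm]
  exact congrFun hu ⟨j, hj⟩

end InnerProductSpace

section Saturation

variable {ι E : Type*} [NormedAddCommGroup E] [InnerProductSpace ℝ E]

noncomputable def saturMap (l : ℝ) (v : ι → E) (x : E) : ι → ℝ := fun j => satur l ⟪x, v j⟫

def saturationRecoveryLevels (v : ι → E) : Set ℝ :=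
  {l | 0 < l ∧ InjOn (saturMap l v) (closedBall 0 1)}

noncomputable def minAbsInner (v : ι → E) (s : Finset ι) (x : E) : ℝ :=
  sInf {r | ∃ j ∈ s, r = |⟪x, v j⟫|}

def minAbsInnerValues (v : ι → E) (k : ℕ) : Set ℝ :=
  {t | ∃ x : E, ‖x‖ = 1 ∧ ∃ s : Finset ι, s.card = k ∧ t = minAbsInner v s x}

variable {v : ι → E} {s : Finset ι} {x : E} {l : ℝ}

lemma minAbsInner_eq_inf' (hs : s.Nonempty) :
    minAbsInner v s x = s.inf' hs fun j => |⟪x, v j⟫| := by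
  rw [inf'_eq_csInf_image, minAbsInner]
  congr 1
  ext r
  simp [eq_comm]

lemma minAbsInner_nonneg : 0 ≤ minAbsInner v s x :=
  Real.sInf_nonneg (by rintro _ ⟨j, -, rfl⟩; exact abs_nonneg _)

lemma minAbsInner_lt_iff (hs : s.Nonempty) : minAbsInner v s x < l ↔ ∃ j ∈ s, |⟪x, v j⟫| < l := by
  rw [minAbsInner_eq_inf' hs, inf'_lt_iff]

lemma minAbsInner_le_iff (hs : s.Nonempty) : minAbsInner v s x ≤ l ↔ ∃ j ∈ s, |⟪x, v j⟫| ≤ l := by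
  rw [minAbsInner_eq_inf' hs, inf'_le_iff]

lemma continuous_minAbsInner (v : ι → E) (s : Finset ι) : Continuous (minAbsInner v s) := by
  rcases s.eq_empty_or_nonempty with rfl | hs
  · have : minAbsInner v ∅ = fun _ => 0 := by
      funext x
      simp [minAbsInner]
    exact this ▸ continuous_const
  · rw [show minAbsInner v s = fun x => s.inf' hs fun j => |⟪x, v j⟫| from
      funext fun x => minAbsInner_eq_inf' hs]
    exact Continuous.finset_inf'_apply hs fun j _ => (continuous_id.inner continuous_const).abs

lemma exists_isGreatest_minAbsInnerValues [Fintype ι] [FiniteDimensional ℝ E] [Nontrivial E]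
    (v : ι → E) {k : ℕ} (hk : k ≤ Fintype.card ι) : ∃ M, IsGreatest (minAbsInnerValues v k) M := by
  have hcompact : IsCompact (minAbsInnerValues v k) := by
    have : minAbsInnerValues v k =
        ⋃ s ∈ {s : Finset ι | s.card = k}, minAbsInner v s '' sphere 0 1 := by
      ext t
      simp only [minAbsInnerValues, mem_ofPred_eq, mem_iUnion, mem_image, mem_sphere_zero_iff_norm,
        exists_prop]
      grind
    rw [this]
    exact (toFinite _).isCompact_biUnion fun s _ =>
      (isCompact_sphere 0 1).image (continuous_minAbsInner v s)
  obtain ⟨x, hx⟩ : (sphere (0 : E) 1).Nonempty := NormedSpace.sphere_nonempty.2 zero_le_one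
  obtain ⟨s, -, hs⟩ :=
    Finset.exists_subset_card_eq (s := (univ : Finset ι)) (n := k) (by rwa [card_univ])
  exact hcompact.exists_isGreatest ⟨_, x, mem_sphere_zero_iff_norm.1 hx, s, hs, rfl⟩

lemma injOn_saturMap_closedBall [Fintype ι] [FiniteDimensional ℝ E] (hv : IsFullSpark ℝ v)
    (hcard : finrank ℝ E ≤ Fintype.card ι)
    (hl : ∀ w : E, ‖w‖ = 1 → ∀ s : Finset ι, s.card = Fintype.card ι - finrank ℝ E + 1 →
      ∃ j ∈ s, |⟪w, v j⟫| < l) :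
    InjOn (saturMap l v) (closedBall 0 1) := by
  intro x hx y hy hxy
  by_contra hne
  obtain ⟨s, hs, hsne⟩ := hv.exists_card_eq_forall_inner_ne_zero hcard (sub_ne_zero.2 hne)
  have hsat : ∀ j ∈ s, l ≤ |⟪x, v j⟫| ∧ l ≤ |⟪y, v j⟫| := fun j hj => by
    have hxy' : ⟪x, v j⟫ ≠ ⟪y, v j⟫ := by rw [← sub_ne_zero, ← inner_sub_left]; exact hsne j hj
    exact ⟨le_abs_of_satur_eq_of_ne (congrFun hxy j) hxy',
      le_abs_of_satur_eq_of_ne (congrFun hxy j).symm hxy'.symm⟩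
  obtain ⟨w, hw0, hw1, hwl⟩ : ∃ w : E, w ≠ 0 ∧ ‖w‖ ≤ 1 ∧ ∀ j ∈ s, l ≤ |⟪w, v j⟫| := by
    by_cases hx0 : x = 0
    · exact ⟨y, fun hy0 => hne (hx0.trans hy0.symm), mem_closedBall_zero_iff.1 hy,
        fun j hj => (hsat j hj).2⟩
    · exact ⟨x, hx0, mem_closedBall_zero_iff.1 hx, fun j hj => (hsat j hj).1⟩
  obtain ⟨j, hj, hlt⟩ := hl (‖w‖⁻¹ • w) (norm_smul_inv_norm hw0) s hs
  have hinv : 1 ≤ ‖w‖⁻¹ := (one_le_inv₀ (norm_pos_iff.2 hw0)).2 hw1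
  refine lt_irrefl l <| calc
    l ≤ |⟪w, v j⟫| := hwl j hj
    _ ≤ ‖w‖⁻¹ * |⟪w, v j⟫| := le_mul_of_one_le_left (abs_nonneg _) hinv
    _ = |⟪‖w‖⁻¹ • w, v j⟫| := by
      rw [real_inner_smul_left, abs_mul, abs_of_nonneg (inv_nonneg.2 (norm_nonneg w))]
    _ < l := hlt

lemma not_injOn_saturMap_closedBall (hl : 0 ≤ l) {x u : E} (hx : ‖x‖ < 1)
    (hxs : ∀ j ∈ s, l < |⟪x, v j⟫|) (hu : u ≠ 0) (hus : ∀ j ∉ s, ⟪u, v j⟫ = 0) :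
    ¬ InjOn (saturMap l v) (closedBall 0 1) := by
  intro hinj
  have hball : ∀ᶠ ε in 𝓝 (0 : ℝ), x + ε • u ∈ ball 0 1 :=
    (continuous_const.add (continuous_id.smul continuous_const)).tendsto' 0 x (by simp)
      |>.eventually (isOpen_ball.mem_nhds (mem_ball_zero_iff.2 hx))
  have hsmall : ∀ᶠ ε in 𝓝 (0 : ℝ), ∀ j ∈ s, |ε * ⟪u, v j⟫| ≤ |⟪x, v j⟫| - l :=
    (Finset.eventually_all _).2 fun j hj =>
      ((continuous_id.mul continuous_const).abs.tendsto' 0 0 (by simp)).eventually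
        (ge_mem_nhds (by linarith [hxs j hj]))
  obtain ⟨ε, ⟨hεball, hεsmall⟩, hε0⟩ :=
    ((hball.and hsmall).filter_mono nhdsWithin_le_nhds |>.and self_mem_nhdsWithin).exists
      (f := 𝓝[≠] (0 : ℝ))
  have hsame : saturMap l v x = saturMap l v (x + ε • u) := funext fun j => by
    by_cases hj : j ∈ s
    · refine satur_eq_of_abs_sub_le hl ?_
      rw [inner_add_left, real_inner_smul_left, add_sub_cancel_left]
      exact hεsmall j hj
    · simp [saturMap, inner_add_left, real_inner_smul_left, hus j hj]
  have := hinj (mem_closedBall_zero_iff.2 hx.le) (ball_subset_closedBall hεball) hsame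
  exact smul_ne_zero hε0 hu (left_eq_add.1 this)

lemma exists_abs_inner_le_of_injOn [Fintype ι] [FiniteDimensional ℝ E] (hl : 0 ≤ l)
    (hinj : InjOn (saturMap l v) (closedBall 0 1)) (hx : ‖x‖ = 1)
    (hs : s.card = Fintype.card ι - finrank ℝ E + 1) : ∃ j ∈ s, |⟪x, v j⟫| ≤ l := by
  classical
  by_contra! hxs
  obtain ⟨u, hu, hus⟩ := exists_ne_zero_forall_inner_eq_zero v sᶜ
    (by rw [card_compl]; have := card_le_univ s; omega)
  have hnear : ∀ᶠ c in 𝓝 (1 : ℝ), ∀ j ∈ s, l < c * |⟪x, v j⟫| :=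
    (Finset.eventually_all _).2 fun j hj =>
      ((continuous_mul_const _).tendsto' 1 _ (one_mul _)).eventually (lt_mem_nhds (hxs j hj))
  obtain ⟨c, hcs, hc0, hc1⟩ :=
    ((hnear.filter_mono nhdsWithin_le_nhds).and (Ioo_mem_nhdsLT zero_lt_one)).exists
  refine not_injOn_saturMap_closedBall hl (x := c • x) ?_ (fun j hj => ?_) hu
    (fun j hj => hus j (mem_compl.2 hj)) hinj
  · rwa [norm_smul, hx, mul_one, Real.norm_of_nonneg hc0.le]
  · rw [real_inner_smul_left, abs_mul, abs_of_pos hc0]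
    exact hcs j hj

lemma Ioi_subset_saturationRecoveryLevels [Fintype ι] [FiniteDimensional ℝ E]
    (hv : IsFullSpark ℝ v) (hcard : finrank ℝ E ≤ Fintype.card ι) {M : ℝ}
    (hM : IsGreatest (minAbsInnerValues v (Fintype.card ι - finrank ℝ E + 1)) M) :
    Ioi M ⊆ saturationRecoveryLevels v := by
  intro l hMl
  obtain ⟨x, -, s, -, rfl⟩ := hM.1
  refine ⟨minAbsInner_nonneg.trans_lt hMl, injOn_saturMap_closedBall hv hcard fun w hw s hs => ?_⟩
  have hsne : s.Nonempty := card_pos.1 (by omega)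
  exact (minAbsInner_lt_iff hsne).1 ((hM.2 ⟨w, hw, s, hs, rfl⟩).trans_lt hMl)

lemma saturationRecoveryLevels_subset_Ici [Fintype ι] [FiniteDimensional ℝ E] {M : ℝ}
    (hM : M ∈ minAbsInnerValues v (Fintype.card ι - finrank ℝ E + 1)) :
    saturationRecoveryLevels v ⊆ Ici M := by
  rintro l ⟨hl, hinj⟩
  obtain ⟨x, hx, s, hs, rfl⟩ := hM
  exact (minAbsInner_le_iff (card_pos.1 (by omega))).2
    (exists_abs_inner_le_of_injOn hl.le hinj hx hs)

end Saturation

theorem critical_level_eq_max_min_formula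
    {n m : ℕ} (hn : 0 < n) (hmn : n ≤ m)
    (xv : Fin m → EuclideanSpace ℝ (Fin n))
    (hfs : ∀ s : Finset (Fin m), s.card = n →
      LinearIndependent ℝ (fun j : {j // j ∈ s} => xv j.1))
    (lamc : ℝ)
    (hlamc : lamc = sInf {l : ℝ | 0 < l ∧ Set.InjOn
      (fun x : EuclideanSpace ℝ (Fin n) => fun j : Fin m => satur l ⟪x, xv j⟫)
      (Metric.closedBall 0 1)}) :
    IsGreatest {t : ℝ | ∃ x : EuclideanSpace ℝ (Fin n), ‖x‖ = 1 ∧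
      ∃ s : Finset (Fin m), s.card = m - n + 1 ∧
        t = sInf {r : ℝ | ∃ j ∈ s, r = |⟪x, xv j⟫|}} lamc := by
  have hE : finrank ℝ (EuclideanSpace ℝ (Fin n)) = n := finrank_euclideanSpace_fin
  have : Nontrivial (EuclideanSpace ℝ (Fin n)) := nontrivial_of_finrank_pos (hE ▸ hn)
  have hv : IsFullSpark ℝ xv := fun s hs => hfs s (hs.trans hE)
  have hk : m - n + 1 = Fintype.card (Fin m) - finrank ℝ (EuclideanSpace ℝ (Fin n)) + 1 := by
    rw [Fintype.card_fin, hE]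
  have hcard : finrank ℝ (EuclideanSpace ℝ (Fin n)) ≤ Fintype.card (Fin m) := by
    rwa [Fintype.card_fin, hE]
  change lamc = sInf (saturationRecoveryLevels xv) at hlamc
  change IsGreatest (minAbsInnerValues xv (m - n + 1)) lamc
  obtain ⟨M, hM⟩ := exists_isGreatest_minAbsInnerValues xv (k := m - n + 1)
    (by rw [Fintype.card_fin]; omega)
  rw [hk] at hM ⊢
  have hA := Ioi_subset_saturationRecoveryLevels hv hcard hM
  have hB := saturationRecoveryLevels_subset_Ici hM.1
  have hglb : IsGLB (saturationRecoveryLevels xv) M :=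
    isGLB_Ioi.of_subset_of_superset isGLB_Ici hA hB
  rwa [hlamc, hglb.csInf_eq ⟨M + 1, hA (lt_add_one M)⟩]
end
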